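/- Let n ≥ 3 and let S_n be the star graph on vertices {0,1,...,n−1} with center 0. Then |K_0| = ∑_{k=2}^{n−1} C(n−1,k)·C(n−1,k−1)·k!, where K_0 is the set of injective partial maps α on {0,...,n−1} with 0 ∉ dom(α), 0 ∈ im(α) and im(α) ∩ {1,...,n−1} ≠ ∅ that are partial endomorphisms of S_n. -/

import Mathlib

variable {V : Type*}

/-- Partial transformations of `V`. -/
abbrev PTrans (V : Type*) := V → Option V

/-- Monoid of partial transformations under (left-to-right) composition. -/
instance : Monoid (PTrans V) where
  mul f g := fun v => (f v).bind g
  one := fun v => some v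
  mul_assoc f g h := by
    funext v
    show ((f v).bind g).bind h = (f v).bind (fun x => (g x).bind h)
    cases f v <;> simp
  one_mul f := by funext v; rfl
  mul_one f := by
    funext v
    show (f v).bind (fun x => some x) = f v
    cases f v <;> simp

/-- Domain of a partial transformation. -/
def pdom (α : PTrans V) : Set V := {u | α u ≠ none}

/-- Image of a partial transformation. -/
def pim (α : PTrans V) : Set V := {v | ∃ u, α u = some v}

def IsPEnd (G : SimpleGraph V) (α : PTrans V) : Prop :=
  ∀ u v u' v', α u = some u' → α v = some v' → G.Adj u v → G.Adj u' v'

def IsPwEnd (G : SimpleGraph V) (α : PTrans V) : Prop :=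
  ∀ u v u' v', α u = some u' → α v = some v' → G.Adj u v → u' ≠ v' → G.Adj u' v'

def IsPsEnd (G : SimpleGraph V) (α : PTrans V) : Prop :=
  ∀ u v u' v', α u = some u' → α v = some v' → (G.Adj u v ↔ G.Adj u' v')

def IsPswEnd (G : SimpleGraph V) (α : PTrans V) : Prop :=
  ∀ u v u' v', α u = some u' → α v = some v' → ((G.Adj u v ∧ u' ≠ v') ↔ G.Adj u' v')

/-- Injectivity of a partial transformation. -/
def PInjective (α : PTrans V) : Prop :=
  ∀ u v w, α u = some w → α v = some w → u = v

open Classical in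
/-- The inverse of a partial (injective) transformation. -/
noncomputable def pinv (α : PTrans V) : PTrans V :=
  fun v => if h : ∃ u, α u = some v then some h.choose else none

/-- Partial automorphism: injective, and both it and its inverse are
partial endomorphisms. -/
def IsPAut (G : SimpleGraph V) (α : PTrans V) : Prop :=
  PInjective α ∧ IsPEnd G α ∧ IsPEnd G (pinv α)

/-- The star graph on vertices `{0,1,...,n-1}` with center `0`. -/
def starGraph (n : ℕ) : SimpleGraph (Fin n) :=
  SimpleGraph.fromRel (fun u _ => (u : ℕ) = 0)

/-!
Every edge of the star meets the centre `0`, so a partial map whose domain misses `0` is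
automatically a partial endomorphism, and only injectivity matters. An injective partial map is
a domain `D` together with an embedding `D ↪ Fin n`; the conditions say that `D ⊆ {1, …, n - 1}`,
`|D| = k ≥ 2`, and `0` lies in the image. Counting embeddings of a `k`-set into an `n`-set that
avoid `0` and subtracting from all embeddings gives
`n⁽ᵏ⁾ - (n - 1)⁽ᵏ⁾ = k! * C(n - 1, k - 1)` (falling factorials), i.e. Pascal's rule.
-/

open Finset
open scoped Nat

theorem Nat.factorial_mul_choose_add_descFactorial (l m : ℕ) :
    (m + 1)! * l.choose m + l.descFactorial (m + 1) = (l + 1).descFactorial (m + 1) := by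
  rw [Nat.descFactorial_eq_factorial_mul_choose, Nat.descFactorial_eq_factorial_mul_choose,
    Nat.choose_succ_succ]
  ring

theorem Function.Embedding.card_mem_range {ι β : Type*} [Fintype ι] [Nonempty ι] [Fintype β]
    (b : β) :
    Nat.card {f : ι ↪ β // b ∈ Set.range f} =
      (Fintype.card ι)! * (Fintype.card β - 1).choose (Fintype.card ι - 1) := by
  classical
  obtain ⟨m, hm⟩ := Nat.exists_eq_add_one_of_ne_zero (Fintype.card_pos (α := ι)).ne'
  obtain ⟨l, hl⟩ := Nat.exists_eq_add_one_of_ne_zero (Fintype.card_pos_iff.2 ⟨b⟩).ne'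
  have hmiss : Nat.card {f : ι ↪ β // b ∉ Set.range f} = l.descFactorial (m + 1) := by
    have hcompl : ∀ f : ι ↪ β, b ∉ Set.range f ↔ ∀ i, f i ∈ ({b}ᶜ : Set β) := by simp [eq_comm]
    rw [Nat.card_congr ((Equiv.subtypeEquivRight hcompl).trans (Equiv.codRestrict ι _)),
      Nat.card_eq_fintype_card, Fintype.card_embedding_eq, Fintype.card_compl_set]
    simp [hm, hl]
  have hsplit : Nat.card {f : ι ↪ β // b ∈ Set.range f} + Nat.card {f : ι ↪ β // b ∉ Set.range f} =
      (l + 1).descFactorial (m + 1) := by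
    rw [Nat.card_eq_fintype_card, Nat.card_eq_fintype_card, Fintype.card_subtype_compl,
      Nat.add_sub_cancel' (Fintype.card_subtype_le _), Fintype.card_embedding_eq, hm, hl]
  rw [hm, hl, Nat.add_sub_cancel, Nat.add_sub_cancel]
  have := Nat.factorial_mul_choose_add_descFactorial l m
  omega

theorem Finset.sum_powerset_filter_le_card {β M : Type*} [AddCommMonoid M] (s : Finset β) (a : ℕ)
    (f : ℕ → M) :
    ∑ t ∈ s.powerset with a ≤ #t, f #t = ∑ k ∈ Icc a #s, (#s).choose k • f k := by
  have hIcc : Icc a #s = {k ∈ range (#s + 1) | a ≤ k} := by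
    ext k
    simp only [mem_Icc, mem_filter, mem_range]
    omega
  rw [sum_filter, sum_powerset_apply_card (fun k => if a ≤ k then f k else 0), hIcc, sum_filter]
  simp only [smul_ite, smul_zero]

theorem Set.ncard_setOf_mem_and_eq_sum {X Y : Type*} [Fintype X] [DecidableEq Y] (f : X → Y)
    (T : Finset Y) (Q : X → Prop) :
    {x | f x ∈ T ∧ Q x}.ncard = ∑ y ∈ T, Nat.card {x // f x = y ∧ Q x} := by
  classical
  rw [Set.ncard_eq_toFinset_card', Set.toFinset_ofPred,
    card_eq_sum_card_fiberwise (f := f) (t := T) fun x hx => (mem_filter.1 (mem_coe.1 hx)).2.1]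
  refine sum_congr rfl fun y hy => ?_
  rw [Nat.card_eq_fintype_card, Fintype.card_subtype, filter_filter]
  congr 1
  refine filter_congr fun x _ => ⟨fun h => ⟨h.2, h.1.2⟩, fun h => ⟨⟨h.1 ▸ hy, h.2⟩, h.1⟩⟩

namespace PTrans

def domFinset [Fintype V] (α : PTrans V) : Finset V := {u | α u ≠ none}

@[simp]
theorem mem_domFinset [Fintype V] {α : PTrans V} {u : V} : u ∈ domFinset α ↔ α u ≠ none := by
  simp [domFinset]

theorem exists_mem_pim_ne_iff_one_lt_card [Fintype V] {α : PTrans V} (hα : PInjective α) {z : V}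
    (hz : z ∈ pim α) : (∃ j ∈ pim α, j ≠ z) ↔ 1 < #(domFinset α) := by
  obtain ⟨u₀, hu₀⟩ := hz
  rw [one_lt_card]
  constructor
  · rintro ⟨j, ⟨u₁, hu₁⟩, hj⟩
    refine ⟨u₀, by simp [hu₀], u₁, by simp [hu₁], fun h => hj ?_⟩
    rw [h, hu₁] at hu₀
    exact Option.some_injective _ hu₀
  · rintro ⟨a, ha, b, hb, hab⟩
    obtain ⟨x, hx⟩ := Option.ne_none_iff_exists'.1 (mem_domFinset.1 ha)
    obtain ⟨y, hy⟩ := Option.ne_none_iff_exists'.1 (mem_domFinset.1 hb)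
    have hxy : x ≠ y := fun h => hab (hα a b y (h ▸ hx) hy)
    by_cases hxz : x = z
    · exact ⟨y, ⟨b, hy⟩, hxz ▸ hxy.symm⟩
    · exact ⟨x, ⟨a, hx⟩, hxz⟩

variable [DecidableEq V]

def ofEmbedding (D : Finset V) (f : D ↪ V) : PTrans V :=
  fun u => if h : u ∈ D then some (f ⟨u, h⟩) else none

theorem ofEmbedding_of_mem {D : Finset V} (f : D ↪ V) {u : V} (h : u ∈ D) :
    ofEmbedding D f u = some (f ⟨u, h⟩) :=
  dif_pos h

theorem ofEmbedding_of_not_mem {D : Finset V} (f : D ↪ V) {u : V} (h : u ∉ D) :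
    ofEmbedding D f u = none :=
  dif_neg h

theorem ofEmbedding_eq_some {D : Finset V} {f : D ↪ V} {u w : V} :
    ofEmbedding D f u = some w ↔ ∃ h : u ∈ D, f ⟨u, h⟩ = w := by
  by_cases h : u ∈ D <;> simp [ofEmbedding, h]

theorem pinjective_ofEmbedding (D : Finset V) (f : D ↪ V) : PInjective (ofEmbedding D f) := by
  intro u v w hu hv
  obtain ⟨hu, rfl⟩ := ofEmbedding_eq_some.1 hu
  obtain ⟨hv, hfv⟩ := ofEmbedding_eq_some.1 hv
  exact congrArg Subtype.val (f.injective hfv).symm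

theorem mem_pim_ofEmbedding {D : Finset V} {f : D ↪ V} {w : V} :
    w ∈ pim (ofEmbedding D f) ↔ w ∈ Set.range f := by
  simp only [pim, Set.mem_ofPred_eq, ofEmbedding_eq_some, Set.mem_range, Subtype.exists]

variable [Fintype V]

theorem domFinset_ofEmbedding (D : Finset V) (f : D ↪ V) : domFinset (ofEmbedding D f) = D := by
  ext u
  by_cases h : u ∈ D <;> simp [ofEmbedding, h]

def equivEmbedding (D : Finset V) :
    {α : PTrans V // PInjective α ∧ domFinset α = D} ≃ (D ↪ V) where
  toFun α :=
    { toFun := fun x => (α.1 x).get <| by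
        rw [Option.isSome_iff_ne_none, ← mem_domFinset, α.2.2]
        exact x.2
      inj' := fun a b hab => Subtype.ext <| α.2.1 a b _ (Option.some_get _).symm <|
        Option.eq_some_iff_get_eq.2 ⟨_, hab.symm⟩ }
  invFun f := ⟨ofEmbedding D f, pinjective_ofEmbedding D f, domFinset_ofEmbedding D f⟩
  left_inv α := by
    obtain ⟨α, hα, rfl⟩ := α
    ext1
    funext u
    show ofEmbedding _ _ u = α u
    by_cases h : u ∈ domFinset α
    · rw [ofEmbedding_of_mem _ h]
      exact Option.some_get _
    · rw [ofEmbedding_of_not_mem _ h]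
      exact (not_not.1 (mt mem_domFinset.2 h)).symm
  right_inv f := by
    ext x
    exact Option.get_of_eq_some _ (ofEmbedding_of_mem f x.2)

theorem card_pinjective_domFinset_eq_mem_pim {D : Finset V} (hD : D.Nonempty) (w : V) :
    Nat.card {α : PTrans V // (PInjective α ∧ domFinset α = D) ∧ w ∈ pim α} =
      (#D)! * (Fintype.card V - 1).choose (#D - 1) := by
  have : Nonempty D := hD.to_subtype
  rw [← Nat.card_congr (Equiv.subtypeSubtypeEquivSubtypeInter _ (fun α => w ∈ pim α)),
    ← Nat.card_congr (Equiv.subtypeEquiv (p := fun f : D ↪ V => w ∈ Set.range f)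
      (q := fun α => w ∈ pim α.1) (equivEmbedding D).symm
      fun f => (mem_pim_ofEmbedding (f := f)).symm),
    Function.Embedding.card_mem_range, Fintype.card_coe]

theorem ncard_pinjective_not_mem_pdom_mem_pim (z : V) :
    {α : PTrans V | PInjective α ∧ z ∉ pdom α ∧ z ∈ pim α ∧ ∃ j ∈ pim α, j ≠ z}.ncard =
      ∑ k ∈ Icc 2 (Fintype.card V - 1),
        (Fintype.card V - 1).choose k * (Fintype.card V - 1).choose (k - 1) * k ! := by
  let T := {D ∈ ({z}ᶜ : Finset V).powerset | 2 ≤ #D}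
  have hset : {α : PTrans V | PInjective α ∧ z ∉ pdom α ∧ z ∈ pim α ∧ ∃ j ∈ pim α, j ≠ z} =
      {α | domFinset α ∈ T ∧ (PInjective α ∧ z ∈ pim α)} := by
    ext α
    simp only [Set.mem_ofPred_eq, T, mem_filter, mem_powerset, subset_compl_singleton,
      mem_domFinset, pdom]
    constructor
    · rintro ⟨hα, hz, hzα, hj⟩
      exact ⟨⟨hz, (exists_mem_pim_ne_iff_one_lt_card hα hzα).1 hj⟩, hα, hzα⟩
    · rintro ⟨⟨hz, hcard⟩, hα, hzα⟩
      exact ⟨hα, hz, hzα, (exists_mem_pim_ne_iff_one_lt_card hα hzα).2 hcard⟩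
  have hfiber : ∀ D ∈ T, Nat.card {α // domFinset α = D ∧ (PInjective α ∧ z ∈ pim α)} =
      (#D)! * (Fintype.card V - 1).choose (#D - 1) := by
    intro D hD
    have hD : D.Nonempty := card_pos.1 (by simp only [T, mem_filter] at hD; omega)
    rw [← card_pinjective_domFinset_eq_mem_pim hD z]
    exact Nat.card_congr (Equiv.subtypeEquivRight fun α => by tauto)
  have hcompl : #({z}ᶜ : Finset V) = Fintype.card V - 1 := by
    rw [card_compl, card_singleton]
  rw [hset, Set.ncard_setOf_mem_and_eq_sum, sum_congr rfl hfiber]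
  refine (sum_powerset_filter_le_card _ 2 fun k => k ! * (Fintype.card V - 1).choose (k - 1)).trans
    ?_
  rw [hcompl]
  refine sum_congr rfl fun k _ => ?_
  rw [smul_eq_mul]
  ring

end PTrans

theorem isPEnd_of_not_mem_pdom {G : SimpleGraph V} {c : V}
    (hG : ∀ u v, G.Adj u v → u = c ∨ v = c) {α : PTrans V} (hα : c ∉ pdom α) : IsPEnd G α := by
  intro u v u' v' hu hv huv
  refine absurd ?_ hα
  rcases hG u v huv with rfl | rfl
  · simp [pdom, hu]
  · simp [pdom, hv]

theorem starGraph_adj_center {n : ℕ} (hn : 0 < n) {u v : Fin n} (h : (starGraph n).Adj u v) :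
    u = ⟨0, hn⟩ ∨ v = ⟨0, hn⟩ := by
  rw [starGraph, SimpleGraph.fromRel_adj] at h
  exact h.2.imp Fin.ext Fin.ext

theorem stmt10 (n : ℕ) (hn : 3 ≤ n) :
    Set.ncard {α : PTrans (Fin n) | PInjective α ∧ IsPEnd (starGraph n) α ∧
        (⟨0, by omega⟩ : Fin n) ∉ pdom α ∧ (⟨0, by omega⟩ : Fin n) ∈ pim α ∧
        ∃ j ∈ pim α, j ≠ ⟨0, by omega⟩} =
      ∑ k ∈ Finset.Icc 2 (n - 1), (n - 1).choose k * (n - 1).choose (k - 1) * k.factorial := by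
  have hpos : 0 < n := by omega
  have hcount := PTrans.ncard_pinjective_not_mem_pdom_mem_pim (⟨0, hpos⟩ : Fin n)
  rw [Fintype.card_fin] at hcount
  rw [← hcount]
  congr 1
  ext α
  have hend := isPEnd_of_not_mem_pdom (α := α) fun _ _ => starGraph_adj_center hpos
  simp only [Set.mem_ofPred_eq]
  tauto
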